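/- Let $I\subseteq\{0,\ldots,d\}$ with $d\notin I$. Then $\Diamond^d(\Gamma^d_I)=\{d,v_d\}*\Diamond^{d-1}(\Gamma^{d-1}_I)$, i.e., the $d$-dimensional diamond complex of $\Gamma_I$ is the join of the two-point complex $\{d,v_d\}$ (as a 0-sphere) with the $(d-1)$-dimensional diamond complex of $\Gamma_I$. -/

import Mathlib

namespace Paper

/-- Ambient vertex type in dimension `d`: original vertices `0,…,d+1` (left)
and new vertices `v_0,…,v_d` (right). -/
abbrev V (d : ℕ) := Sum (Fin (d+2)) (Fin (d+1))

def origV (d m : ℕ) : V d := Sum.inl ⟨m % (d+2), Nat.mod_lt m (by omega)⟩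
def newV (d m : ℕ) : V d := Sum.inr ⟨m % (d+1), Nat.mod_lt m (by omega)⟩

variable {W : Type*} [DecidableEq W] {W' : Type*} [DecidableEq W']

def IsComplex (Δ : Set (Finset W)) : Prop := ∀ F ∈ Δ, ∀ G, G ⊆ F → G ∈ Δ

def isFacet (Δ : Set (Finset W)) (F : Finset W) : Prop :=
  F ∈ Δ ∧ ∀ G ∈ Δ, F ⊆ G → G = F

def simplexOn (A : Finset W) : Set (Finset W) := {F | F ⊆ A}

def bdrySimplex (A : Finset W) : Set (Finset W) := {F | F ⊂ A}

def joinC (Δ Γ : Set (Finset W)) : Set (Finset W) := {s | ∃ a ∈ Δ, ∃ b ∈ Γ, s = a ∪ b}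

def lkC (Δ : Set (Finset W)) (F : Finset W) : Set (Finset W) :=
  {G | Disjoint F G ∧ F ∪ G ∈ Δ}

def delFace (Δ : Set (Finset W)) (F : Finset W) : Set (Finset W) := {G ∈ Δ | ¬ F ⊆ G}

/-- Stellar subdivision at `F` with new vertex `v`. -/
def sdC (v : W) (F : Finset W) (Δ : Set (Finset W)) : Set (Finset W) :=
  delFace Δ F ∪ joinC (simplexOn {v}) (joinC (bdrySimplex F) (lkC Δ F))

/-- Deletion of a subcomplex: the complex generated by the facets of `Δ`
that are not facets of `Γ`. -/
def delSub (Δ Γ : Set (Finset W)) : Set (Finset W) :=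
  {G | ∃ F, isFacet Δ F ∧ ¬ isFacet Γ F ∧ G ⊆ F}

def IsInduced (Γ Δ : Set (Finset W)) : Prop :=
  Γ ⊆ Δ ∧ ∀ F ∈ Δ, (∀ v ∈ F, ({v} : Finset W) ∈ Γ) → F ∈ Γ

/-- Simplicial isomorphism (via a permutation of the ambient vertex set). -/
def IsoC (Δ Γ : Set (Finset W)) : Prop :=
  ∃ e : Equiv.Perm W, ∀ F : Finset W, F ∈ Δ ↔ F.image (⇑e) ∈ Γ

def mapC (f : W → W') (Δ : Set (Finset W)) : Set (Finset W') := {F | ∃ G ∈ Δ, F = G.image f}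

/-- Number of faces of cardinality `i` (i.e. dimension `i-1`). -/
noncomputable def fnum (Δ : Set (Finset W)) (i : ℕ) : ℕ := {F | F ∈ Δ ∧ F.card = i}.ncard

/-- `h`-numbers of a `d`-dimensional complex. -/
noncomputable def hnum (d : ℕ) (Δ : Set (Finset W)) (j : ℕ) : ℤ :=
  ∑ i ∈ Finset.range (j+1),
    (-1 : ℤ)^(j-i) * ((d+1-i).choose (d+1-j) : ℤ) * (fnum Δ i : ℤ)

/-- `R` is the restriction face of the `i`-th facet of the ordering `L`. -/
def IsRestriction (L : List (Finset W)) (i : ℕ) (R : Finset W) : Prop :=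
  R ⊆ L.getD i ∅ ∧ (∀ j < i, ¬ R ⊆ L.getD j ∅) ∧
    ∀ G ⊆ L.getD i ∅, (∀ j < i, ¬ G ⊆ L.getD j ∅) → R ⊆ G

def IsShelling (Δ : Set (Finset W)) (L : List (Finset W)) : Prop :=
  L.Nodup ∧ (∀ F, F ∈ L ↔ isFacet Δ F) ∧ ∀ i < L.length, ∃ R, IsRestriction L i R

def Shellable (Δ : Set (Finset W)) : Prop := ∃ L, IsShelling Δ L

def IsRelRestriction (Sg : Set (Finset W)) (L : List (Finset W)) (i : ℕ) (R : Finset W) : Prop :=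
  R ⊆ L.getD i ∅ ∧ R ∉ Sg ∧ (∀ j < i, ¬ R ⊆ L.getD j ∅) ∧
    ∀ G ⊆ L.getD i ∅, G ∉ Sg → (∀ j < i, ¬ G ⊆ L.getD j ∅) → R ⊆ G

/-- Shelling of the relative complex `(Δ, Sg)`. -/
def IsRelShelling (Δ Sg : Set (Finset W)) (L : List (Finset W)) : Prop :=
  L.Nodup ∧ (∀ F, F ∈ L ↔ (isFacet Δ F ∧ F ∉ Sg)) ∧
    ∀ i < L.length, ∃ R, IsRelRestriction Sg L i R

/-- The facet of the `(d+1)`-simplex on `{0,…,d+1}` omitting vertex `i`. -/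
def Gface (d i : ℕ) : Finset (V d) :=
  ((Finset.range (d+2)).filter (fun j => j ≠ i)).image (origV d)

def GammaC (d i : ℕ) : Set (Finset (V d)) := simplexOn (Gface d i)

def GammaU (d : ℕ) (I : Finset ℕ) : Set (Finset (V d)) := {F | ∃ i ∈ I, F ⊆ Gface d i}

/-- The face `F_i = {i+1,…,d+1}` subdivided by the diamond operation. -/
def Fsub (d i : ℕ) : Finset (V d) := (Finset.Ioc i (d+1)).image (origV d)

/-- The diamond operation: successive stellar subdivisions at `F_0, F_1, …, F_d`
with new vertices `v_0,…,v_d` (subdivision at a non-face has no effect). -/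
def Diam (d : ℕ) (Δ : Set (Finset (V d))) : Set (Finset (V d)) :=
  (List.range (d+1)).foldl (fun Γ i => sdC (newV d i) (Fsub d i) Γ) Δ

def DiamU (d : ℕ) (I : Finset ℕ) : Set (Finset (V d)) := Diam d (GammaU d I)

/-- Boundary complex of the cross-polytope on the vertex pairs `{j, v_j}`, `j ∈ S`. -/
def crossN (d : ℕ) (S : Finset ℕ) : Set (Finset (V d)) :=
  {F | (∀ x ∈ F, ∃ j ∈ S, x = origV d j ∨ x = newV d j) ∧
       ∀ j ∈ S, ¬ (origV d j ∈ F ∧ newV d j ∈ F)}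

/-- Boundary complex: generated by the faces of cardinality `n` contained in
exactly one facet. -/
def bdryC (n : ℕ) (Δ : Set (Finset W)) : Set (Finset W) :=
  {G | ∃ F, G ⊆ F ∧ F ∈ Δ ∧ F.card = n ∧ ∃! H, isFacet Δ H ∧ F ⊆ H}

/-- Positions in `P` at which `G` differs from the reference facet `F0`. -/
def diffSet (d : ℕ) (P : Finset ℕ) (F0 G : Finset (V d)) : Finset ℕ :=
  P.filter (fun j => decide (origV d j ∈ G) ≠ decide (origV d j ∈ F0))

/-- Degree lexicographic comparison of characteristic (difference) sets. -/
def dlexLT (D D' : Finset ℕ) : Prop :=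
  D.card < D'.card ∨
    (D.card = D'.card ∧ ∃ m, m ∉ D ∧ m ∈ D' ∧ ∀ j < m, (j ∈ D ↔ j ∈ D'))

/-- `L` lists the facets of `Δ` in degree lexicographic order w.r.t. `F0`. -/
def IsDegLexOrder (d : ℕ) (P : Finset ℕ) (Δ : Set (Finset (V d)))
    (F0 : Finset (V d)) (L : List (Finset (V d))) : Prop :=
  L.Nodup ∧ (∀ F, F ∈ L ↔ isFacet Δ F) ∧
    L.Pairwise (fun G G' => dlexLT (diffSet d P F0 G) (diffSet d P F0 G'))

/-- Vertices of `F` sitting at the positions in `D`. -/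
def posVerts (d : ℕ) (F : Finset (V d)) (D : Finset ℕ) : Finset (V d) :=
  F.filter (fun x => ∃ j ∈ D, x = origV d j ∨ x = newV d j)

def IsoN (Δ Γ : Set (Finset ℕ)) : Prop :=
  ∃ e : Equiv.Perm ℕ, ∀ F : Finset ℕ, F ∈ Δ ↔ F.image (⇑e) ∈ Γ

def StellarMove (Δ Γ : Set (Finset ℕ)) : Prop :=
  ∃ (F : Finset ℕ) (v : ℕ), F ∈ Δ ∧ F ≠ ∅ ∧ (∀ G ∈ Δ, v ∉ G) ∧ Γ = sdC v F Δ

/-- PL homeomorphism of simplicial complexes, encoded via Alexander's theorem as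
stellar equivalence: the equivalence relation generated by stellar subdivisions
(and their inverses, the welds) together with simplicial isomorphisms. -/
def PLHomeo (Δ Γ : Set (Finset ℕ)) : Prop :=
  Relation.EqvGen (fun A B => StellarMove A B ∨ IsoN A B) Δ Γ

def encV (d : ℕ) : V d → ℕ := Sum.elim (fun j => 2 * j.val) (fun j => 2 * j.val + 1)

def toN (d : ℕ) (Δ : Set (Finset (V d))) : Set (Finset ℕ) := mapC (encV d) Δ

def ballN (c : ℕ) : Set (Finset ℕ) := {F | F ⊆ Finset.range c}

def sphereN (c : ℕ) : Set (Finset ℕ) := {F | F ⊂ Finset.range (c+1)}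

/-- `Δ` is a combinatorial ball of dimension `c-1` (a `(c-1)`-simplex has `c` vertices). -/
def IsCombBall (d c : ℕ) (Δ : Set (Finset (V d))) : Prop := PLHomeo (toN d Δ) (ballN c)

/-- `Δ` is a combinatorial sphere of dimension `c-1`. -/
def IsCombSphere (d c : ℕ) (Δ : Set (Finset (V d))) : Prop := PLHomeo (toN d Δ) (sphereN c)

def ConnC (Δ : Set (Finset W)) : Prop :=
  ∀ u v : W, ({u} : Finset W) ∈ Δ → ({v} : Finset W) ∈ Δ →
    Relation.ReflTransGen (fun a b => ({a, b} : Finset W) ∈ Δ) u v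

/-- Combinatorial `d`-manifold (possibly with boundary): connected, pure, and all
links of nonempty faces are combinatorial balls or spheres of dimension `d - |F|`. -/
def IsCombManifold (d : ℕ) (Δ : Set (Finset (V d))) : Prop :=
  IsComplex Δ ∧ (∅ : Finset (V d)) ∈ Δ ∧ ConnC Δ ∧
  (∀ F ∈ Δ, ∃ G, isFacet Δ G ∧ F ⊆ G ∧ G.card = d+1) ∧
  ∀ F ∈ Δ, F ≠ (∅ : Finset (V d)) →
    (IsCombBall d (d+1-F.card) (lkC Δ F) ∨ IsCombSphere d (d+1-F.card) (lkC Δ F))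

def liftV (d : ℕ) : V d → V (d+1) := Sum.map Fin.castSucc Fin.castSucc

/-- The relabeling `π : i ↦ i+1`, `v_i ↦ v_{i+1}`. -/
def piV (d : ℕ) : V d → V (d+1) := Sum.map Fin.succ Fin.succ

/-- The relabeling `ρ : i ↦ i-1`, `v_i ↦ v_{i-1}` (indices mod `d+1`). -/
def rhoV (d : ℕ) : V d → V d := fun x =>
  match x with
  | Sum.inl j => origV d ((j.val + d) % (d+1))
  | Sum.inr j => newV d ((j.val + d) % (d+1))

/-- `ψ` swaps the vertices `d` and `v_d`. -/
def psiV (d : ℕ) : V d → V d := fun x => Equiv.swap (origV d d) (newV d d) x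

def sigmaV (d : ℕ) : V d → V d := psiV d ∘ rhoV d

/-- `Δ` is (isomorphic to) the boundary complex of the `(d+1)`-dimensional
cross-polytope. -/
def IsCrossBdry (d : ℕ) (Δ : Set (Finset W)) : Prop :=
  ∃ f : Fin (d+1) × Bool → W, Function.Injective f ∧
    Δ = {F | (∀ v ∈ F, ∃ p, v = f p) ∧
             ∀ j : Fin (d+1), ¬ (f (j, true) ∈ F ∧ f (j, false) ∈ F)}

/-- `Sg` is a connected sum of `Δ` and `Γ`: they meet exactly in the full simplex
on a common facet `F`, which is removed. -/
def IsConnSum (Δ Γ Sg : Set (Finset W)) : Prop :=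
  ∃ F : Finset W, isFacet Δ F ∧ isFacet Γ F ∧ Δ ∩ Γ = simplexOn F ∧ Sg = (Δ ∪ Γ) \ {F}

/-- Connected sum of `m+1` copies of the boundary of the `(d+1)`-cross-polytope. -/
def IsCrossStacked (d : ℕ) : ℕ → Set (Finset W) → Prop
  | 0, Δ => IsCrossBdry d Δ
  | (m+1), Δ => ∃ A B : Set (Finset W), IsCrossStacked d m A ∧ IsCrossBdry d B ∧ IsConnSum A B Δ

/-- The initial facet of the block `Diam(Γ_{iℓ})` (for block index `ℓ ≥ 1`;
block `0` uses the facet `G0` meeting the boundary). -/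
def initFacet (d i1 iℓ : ℕ) (G0 : Finset (V d)) (ℓ : ℕ) : Finset (V d) :=
  if ℓ = 0 then G0
  else ((Finset.range iℓ).image (origV d)) ∪ {newV d iℓ} ∪
       ((Finset.Ioo iℓ (max i1 iℓ)).image (origV d)) ∪
       ((Finset.Icc (max i1 iℓ) d).image (newV d))

end Paper

namespace Paper

/-!
Stellar subdivision commutes with unions of complexes and with joining a complex whose faces
miss the subdivided face. Hence `Diam` distributes over `Γ_I = ⋃_{i ∈ I} Γ_i`, and on a single
simplex `Γ_j` it can be followed step by step: the subdivisions at `F_0, …, F_{j-1}` do nothing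
(each contains the vertex `j`, which `Γ_j` lacks), the one at `F_j` cones `∂F_j ∗ ⟨0, …, j-1⟩`
from `v_j`, and each later one, at the facet `F_{i+1} = F_i ∖ {i+1}` of `∂F_i`, turns `∂F_i` into
`{i+1, v_{i+1}} ∗ ∂F_{i+1}`. So `Diam(Γ_j) = ⟨{0, …, j-1, v_j}⟩ ∗ C(j+1, …, d)`, and for `j < d`
the last pair `{d, v_d}` of the cross-polytope splits off as a join factor.
-/

section Join

variable {W : Type*} [DecidableEq W] {A B C : Set (Finset W)}

lemma joinC_comm : joinC A B = joinC B A := by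
  ext s
  constructor <;> rintro ⟨a, ha, b, hb, rfl⟩ <;> exact ⟨b, hb, a, ha, Finset.union_comm _ _⟩

lemma joinC_assoc : joinC (joinC A B) C = joinC A (joinC B C) := by
  ext s
  constructor
  · rintro ⟨_, ⟨a, ha, b, hb, rfl⟩, c, hc, rfl⟩
    exact ⟨a, ha, b ∪ c, ⟨b, hb, c, hc, rfl⟩, Finset.union_assoc a b c⟩
  · rintro ⟨a, ha, _, ⟨b, hb, c, hc, rfl⟩, rfl⟩
    exact ⟨a ∪ b, ⟨a, ha, b, hb, rfl⟩, c, hc, (Finset.union_assoc a b c).symm⟩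

instance : Std.Associative (joinC (W := W)) := ⟨fun _ _ _ => joinC_assoc⟩

instance : Std.Commutative (joinC (W := W)) := ⟨fun _ _ => joinC_comm⟩

lemma joinC_empty : joinC A (∅ : Set (Finset W)) = ∅ := by
  ext s
  simp [joinC]

lemma joinC_singleton_empty : joinC A {∅} = A := by
  ext s
  simp [joinC]

lemma singleton_empty_joinC : joinC {∅} A = A := by
  rw [joinC_comm, joinC_singleton_empty]

lemma joinC_union : joinC (A ∪ B) C = joinC A C ∪ joinC B C := by
  ext s
  simp only [joinC, Set.mem_union, Set.mem_ofPred_eq]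
  grind

lemma joinC_union_right : joinC A (B ∪ C) = joinC A B ∪ joinC A C := by
  rw [joinC_comm, joinC_union, joinC_comm (A := B), joinC_comm (A := C)]

lemma joinC_iUnion {ι : Sort*} (f : ι → Set (Finset W)) :
    joinC A (⋃ i, f i) = ⋃ i, joinC A (f i) := by
  ext s
  simp only [joinC, Set.mem_iUnion, Set.mem_ofPred_eq]
  grind

lemma subset_simplexOn_singleton_joinC (v : W) : A ⊆ joinC (simplexOn {v}) A :=
  fun s hs => ⟨∅, Finset.empty_subset _, s, hs, (Finset.empty_union s).symm⟩

lemma simplexOn_union (A B : Finset W) :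
    simplexOn (A ∪ B) = joinC (simplexOn A) (simplexOn B) := by
  ext G
  constructor
  · intro h
    refine ⟨G ∩ A, Finset.inter_subset_right, G ∩ B, Finset.inter_subset_right, ?_⟩
    rw [← Finset.inter_union_distrib_left, Finset.inter_eq_left.2 h]
  · rintro ⟨a, ha, b, hb, rfl⟩
    exact Finset.union_subset_union ha hb

end Join

lemma IsComplex.simplexOn {W : Type*} {A : Finset W} : IsComplex (simplexOn A) :=
  fun _ hF _ hG => hG.trans hF

section Stellar

variable {W : Type*} [DecidableEq W] {A B : Set (Finset W)} {v : W} {F : Finset W}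

lemma sdC_iUnion {ι : Sort*} (f : ι → Set (Finset W)) :
    sdC v F (⋃ i, f i) = ⋃ i, sdC v F (f i) := by
  ext G
  simp only [sdC, delFace, lkC, joinC, Set.mem_union, Set.mem_iUnion, Set.mem_ofPred_eq]
  grind

lemma sdC_of_notMem (hA : IsComplex A) (hF : F ∉ A) : sdC v F A = A := by
  have hdel : delFace A F = A :=
    Set.sep_eq_self_iff_mem_true.2 fun G hG hFG => hF (hA G hG F hFG)
  have hlk : lkC A F = ∅ :=
    Set.eq_empty_of_forall_notMem fun G hG => hF (hA _ hG.2 F Finset.subset_union_left)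
  rw [sdC, hdel, hlk, joinC_empty, joinC_empty, Set.union_empty]

lemma delFace_simplexOn {A : Finset W} (hFA : F ⊆ A) :
    delFace (simplexOn A) F = joinC (bdrySimplex F) (simplexOn (A \ F)) := by
  ext G
  constructor
  · rintro ⟨hGA, hFG⟩
    refine ⟨G ∩ F,
      Finset.inter_subset_right.ssubset_of_ne fun h => hFG (h ▸ Finset.inter_subset_left), G \ F,
      Finset.sdiff_subset_sdiff hGA le_rfl, ?_⟩
    rw [Finset.union_comm, Finset.sdiff_union_inter]
  · rintro ⟨b, hb, a, ha, rfl⟩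
    refine ⟨Finset.union_subset (hb.1.trans hFA) (ha.trans Finset.sdiff_subset), fun h => ?_⟩
    obtain ⟨x, hxF, hxb⟩ := Finset.exists_of_ssubset hb
    rcases Finset.mem_union.1 (h hxF) with hx | hx
    · exact hxb hx
    · exact (Finset.mem_sdiff.1 (ha hx)).2 hxF

lemma lkC_simplexOn {A : Finset W} (hFA : F ⊆ A) :
    lkC (simplexOn A) F = simplexOn (A \ F) := by
  ext G
  simp only [lkC, simplexOn, Set.mem_ofPred_eq, Finset.subset_sdiff, Finset.union_subset_iff]
  exact ⟨fun ⟨hd, _, hGA⟩ => ⟨hGA, hd.symm⟩,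
    fun ⟨hGA, hd⟩ => ⟨hd.symm, hFA, hGA⟩⟩

lemma sdC_simplexOn (v : W) {A : Finset W} (hFA : F ⊆ A) :
    sdC v F (simplexOn A) =
      joinC (simplexOn {v}) (joinC (bdrySimplex F) (simplexOn (A \ F))) := by
  rw [sdC, delFace_simplexOn hFA, lkC_simplexOn hFA]
  exact Set.union_eq_self_of_subset_left (subset_simplexOn_singleton_joinC v)

lemma delFace_bdrySimplex {A : Finset W} {a : W} (ha : a ∈ A) :
    delFace (bdrySimplex A) (A.erase a) = joinC (simplexOn {a}) (bdrySimplex (A.erase a)) := by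
  ext G
  constructor
  · rintro ⟨hGA, hG⟩
    refine ⟨G ∩ {a}, Finset.inter_subset_right, G.erase a,
      (Finset.erase_subset_erase a hGA.1).ssubset_of_ne fun h => hG (h ▸ G.erase_subset a),
      ?_⟩
    ext x
    simp only [Finset.mem_union, Finset.mem_inter, Finset.mem_singleton, Finset.mem_erase]
    tauto
  · rintro ⟨c, hc, e, he, rfl⟩
    obtain ⟨x, hxA, hxe⟩ := Finset.exists_of_ssubset he
    have hxa : x ≠ a := Finset.ne_of_mem_erase hxA
    have hxc : x ∉ c ∪ e := fun h =>
      (Finset.mem_union.1 h).elim (fun h => hxa (Finset.mem_singleton.1 (hc h))) hxe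
    have hceA : c ∪ e ⊆ A := Finset.union_subset (hc.trans (Finset.singleton_subset_iff.2 ha))
      (he.1.trans (Finset.erase_subset a A))
    exact ⟨(Finset.ssubset_iff_of_subset hceA).2 ⟨x, Finset.mem_of_mem_erase hxA, hxc⟩,
      fun h => hxc (h hxA)⟩

lemma lkC_bdrySimplex {A : Finset W} {a : W} (ha : a ∈ A) :
    lkC (bdrySimplex A) (A.erase a) = {∅} := by
  ext G
  simp only [lkC, bdrySimplex, Set.mem_ofPred_eq, Set.mem_singleton_iff]
  constructor
  · rintro ⟨hd, hG⟩
    refine Finset.eq_empty_of_forall_notMem fun x hx => hG.ne ?_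
    have : x = a := by
      by_contra hxa
      exact Finset.disjoint_right.1 hd hx
        (Finset.mem_erase.2 ⟨hxa, hG.1 (Finset.mem_union_right _ hx)⟩)
    subst this
    exact le_antisymm hG.1 fun y hy => by grind
  · rintro rfl
    simpa using Finset.erase_ssubset ha

lemma sdC_bdrySimplex (v : W) {A : Finset W} {a : W} (ha : a ∈ A) :
    sdC v (A.erase a) (bdrySimplex A) =
      joinC (simplexOn {a} ∪ simplexOn {v}) (bdrySimplex (A.erase a)) := by
  rw [sdC, delFace_bdrySimplex ha, lkC_bdrySimplex ha, joinC_singleton_empty, joinC_union]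

lemma sdC_joinC (v : W) (hd : ∀ a ∈ A, Disjoint F a) :
    sdC v F (joinC A B) = joinC A (sdC v F B) := by
  have hdel : delFace (joinC A B) F = joinC A (delFace B F) := by
    ext G
    constructor
    · rintro ⟨⟨a, ha, b, hb, rfl⟩, hF⟩
      exact ⟨a, ha, b, ⟨hb, fun h => hF (h.trans Finset.subset_union_right)⟩, rfl⟩
    · rintro ⟨a, ha, b, ⟨hb, hF⟩, rfl⟩
      exact ⟨⟨a, ha, b, hb, rfl⟩, fun h => hF (Disjoint.left_le_of_le_sup_left h (hd a ha))⟩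
  have hlk : lkC (joinC A B) F = joinC A (lkC B F) := by
    ext G
    constructor
    · rintro ⟨hFG, a, ha, b, hb, hab⟩
      have hFab : F ⊆ a ∪ b := hab ▸ Finset.subset_union_left
      have hFb : F ⊆ b := Disjoint.left_le_of_le_sup_left hFab (hd a ha)
      refine ⟨a, ha, b \ F,
        ⟨Finset.disjoint_sdiff, by rwa [Finset.union_sdiff_of_subset hFb]⟩, ?_⟩
      ext x
      have hx := Finset.ext_iff.1 hab x
      have hxa : x ∈ F → x ∉ a := fun h => Finset.disjoint_left.1 (hd a ha) h
      have hxG : x ∈ F → x ∉ G := fun h => Finset.disjoint_left.1 hFG h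
      simp only [Finset.mem_union, Finset.mem_sdiff] at hx ⊢
      tauto
    · rintro ⟨a, ha, g, ⟨hFg, hg⟩, rfl⟩
      refine ⟨Finset.disjoint_union_right.2 ⟨hd a ha, hFg⟩, a, ha, F ∪ g, hg, ?_⟩
      rw [Finset.union_left_comm]
  rw [sdC, sdC, hdel, hlk, joinC_union_right]
  ac_rfl

end Stellar

section Vertices

variable {d m : ℕ}

/-- The index `j` shared by the two vertices `j` and `v_j`. -/
def pairIdx : V d → ℕ := Sum.elim Fin.val Fin.val

lemma pairIdx_origV (hm : m < d + 2) : pairIdx (origV d m) = m := by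
  simp [pairIdx, origV, Nat.mod_eq_of_lt hm]

lemma pairIdx_newV (hm : m < d + 1) : pairIdx (newV d m) = m := by
  simp [pairIdx, newV, Nat.mod_eq_of_lt hm]

lemma eq_origV_or_eq_newV_iff (hm : m < d + 1) {x : V d} :
    x = origV d m ∨ x = newV d m ↔ pairIdx x = m := by
  rcases x with ⟨k, hk⟩ | ⟨k, hk⟩ <;>
    simp [pairIdx, origV, newV, Nat.mod_eq_of_lt hm, Nat.mod_eq_of_lt (show m < d + 2 by omega),
      eq_comm (a := k)]

lemma liftV_origV (hm : m < d + 2) : liftV d (origV d m) = origV (d+1) m := by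
  simp [liftV, origV, Nat.mod_eq_of_lt hm, Nat.mod_eq_of_lt (show m < d + 3 by omega)]

lemma liftV_newV (hm : m < d + 1) : liftV d (newV d m) = newV (d+1) m := by
  simp [liftV, newV, Nat.mod_eq_of_lt hm, Nat.mod_eq_of_lt (show m < d + 2 by omega)]

end Vertices

section CrossPolytope

variable {d m : ℕ} {S T : Finset ℕ}

lemma mem_crossN (hS : ∀ m ∈ S, m < d + 1) {F : Finset (V d)} :
    F ∈ crossN d S ↔
      (∀ x ∈ F, pairIdx x ∈ S) ∧ ∀ m ∈ S, ¬(origV d m ∈ F ∧ newV d m ∈ F) := by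
  refine and_congr_left' (forall₂_congr fun x _ => ⟨?_, fun hx => ⟨_, hx, ?_⟩⟩)
  · rintro ⟨m, hm, hx⟩
    exact (eq_origV_or_eq_newV_iff (hS m hm)).1 hx ▸ hm
  · exact (eq_origV_or_eq_newV_iff (hS _ hx)).2 rfl

lemma crossN_empty : crossN d ∅ = {∅} := by
  ext F
  simp [crossN, Finset.eq_empty_iff_forall_notMem]

lemma crossN_singleton :
    crossN d {m} = simplexOn {origV d m} ∪ simplexOn {newV d m} := by
  have hon : origV d m ≠ newV d m := by simp [origV, newV]
  ext F
  simp only [crossN, simplexOn, Set.mem_union, Set.mem_ofPred_eq, Finset.mem_singleton,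
    exists_eq_left, forall_eq, Finset.subset_iff]
  grind

lemma joinC_crossN (hST : Disjoint S T) (hlt : ∀ m ∈ S ∪ T, m < d + 1) :
    joinC (crossN d S) (crossN d T) = crossN d (S ∪ T) := by
  have hS : ∀ m ∈ S, m < d + 1 := fun m hm => hlt m (Finset.mem_union_left T hm)
  have hT : ∀ m ∈ T, m < d + 1 := fun m hm => hlt m (Finset.mem_union_right S hm)
  ext F
  constructor
  · rintro ⟨a, ha, b, hb, rfl⟩
    rw [mem_crossN hS] at ha
    rw [mem_crossN hT] at hb
    refine (mem_crossN hlt).2 ⟨fun x hx => ?_, fun m hm ⟨ho, hn⟩ => ?_⟩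
    · rcases Finset.mem_union.1 hx with hx | hx
      · exact Finset.mem_union_left T (ha.1 x hx)
      · exact Finset.mem_union_right S (hb.1 x hx)
    have hmo := pairIdx_origV (Nat.lt_succ_of_lt (hlt m hm))
    have hmn := pairIdx_newV (hlt m hm)
    rcases Finset.mem_union.1 hm with hm | hm
    · have hnb : ∀ y ∈ b, pairIdx y ≠ m := fun y hy h =>
        Finset.disjoint_left.1 hST hm (h ▸ hb.1 y hy)
      exact ha.2 m hm ⟨(Finset.mem_union.1 ho).resolve_right fun h => hnb _ h hmo,
        (Finset.mem_union.1 hn).resolve_right fun h => hnb _ h hmn⟩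
    · have hna : ∀ y ∈ a, pairIdx y ≠ m := fun y hy h =>
        Finset.disjoint_right.1 hST hm (h ▸ ha.1 y hy)
      exact hb.2 m hm ⟨(Finset.mem_union.1 ho).resolve_left fun h => hna _ h hmo,
        (Finset.mem_union.1 hn).resolve_left fun h => hna _ h hmn⟩
  · intro hF
    rw [mem_crossN hlt] at hF
    have hpart (U : Finset ℕ) (hU : U ⊆ S ∪ T) (hU' : ∀ m ∈ U, m < d + 1) :
        F.filter (pairIdx · ∈ U) ∈ crossN d U :=
      (mem_crossN hU').2 ⟨fun x hx => (Finset.mem_filter.1 hx).2, fun m hm ⟨ho, hn⟩ =>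
        hF.2 m (hU hm) ⟨Finset.mem_of_mem_filter _ ho, Finset.mem_of_mem_filter _ hn⟩⟩
    refine ⟨_, hpart S Finset.subset_union_left hS, _, hpart T Finset.subset_union_right hT, ?_⟩
    rw [Finset.filter_union_right,
      Finset.filter_true_of_mem fun x hx => Finset.mem_union.1 (hF.1 x hx)]

lemma crossN_insert (hmS : m ∉ S) (hm : m < d + 1) (hS : ∀ k ∈ S, k < d + 1) :
    crossN d (insert m S) = joinC (crossN d {m}) (crossN d S) := by
  rw [Finset.insert_eq]
  refine (joinC_crossN (Finset.disjoint_singleton_left.2 hmS) fun k hk => ?_).symm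
  exact (Finset.mem_union.1 hk).elim (fun h => Finset.mem_singleton.1 h ▸ hm) (hS k)

end CrossPolytope

section Image

variable {W W' : Type*} [DecidableEq W'] (f : W → W')

lemma mapC_union (A B : Set (Finset W)) : mapC f (A ∪ B) = mapC f A ∪ mapC f B := by
  ext F
  simp only [mapC, Set.mem_union, Set.mem_ofPred_eq]
  grind

lemma mapC_iUnion {ι : Sort*} (A : ι → Set (Finset W)) :
    mapC f (⋃ i, A i) = ⋃ i, mapC f (A i) := by
  ext F
  simp only [mapC, Set.mem_iUnion, Set.mem_ofPred_eq]
  grind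

lemma mapC_singleton_empty : mapC f {∅} = {∅} := by
  ext F
  simp [mapC]

lemma mapC_simplexOn (A : Finset W) : mapC f (simplexOn A) = simplexOn (A.image f) := by
  ext F
  simp only [mapC, simplexOn, Set.mem_ofPred_eq, Finset.subset_image_iff, eq_comm]

lemma mapC_joinC [DecidableEq W] (A B : Set (Finset W)) :
    mapC f (joinC A B) = joinC (mapC f A) (mapC f B) := by
  ext F
  constructor
  · rintro ⟨_, ⟨a, ha, b, hb, rfl⟩, rfl⟩
    exact ⟨a.image f, ⟨a, ha, rfl⟩, b.image f, ⟨b, hb, rfl⟩, Finset.image_union a b⟩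
  · rintro ⟨_, ⟨a, ha, rfl⟩, _, ⟨b, hb, rfl⟩, rfl⟩
    exact ⟨a ∪ b, ⟨a, ha, b, hb, rfl⟩, (Finset.image_union a b).symm⟩

end Image

lemma mapC_liftV_crossN {d : ℕ} {S : Finset ℕ} (hS : ∀ m ∈ S, m < d + 1) :
    mapC (liftV d) (crossN d S) = crossN (d+1) S := by
  induction S using Finset.induction_on with
  | empty => rw [crossN_empty, crossN_empty, mapC_singleton_empty]
  | insert m S hmS ih =>
    have hm : m < d + 1 := hS m (Finset.mem_insert_self m S)
    have hS' : ∀ k ∈ S, k < d + 1 := fun k hk => hS k (Finset.mem_insert_of_mem hk)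
    rw [crossN_insert hmS hm hS', crossN_insert hmS (by omega) fun k hk => by grind,
      mapC_joinC, ih hS', crossN_singleton,
      crossN_singleton, mapC_union, mapC_simplexOn, mapC_simplexOn, Finset.image_singleton,
      Finset.image_singleton, liftV_origV (Nat.lt_succ_of_lt hm), liftV_newV hm]

section Faces

variable {d i j : ℕ}

lemma lt_pairIdx_of_mem_Fsub {x : V d} (hx : x ∈ Fsub d i) : i < pairIdx x := by
  obtain ⟨m, hm, rfl⟩ := Finset.mem_image.1 hx
  rw [Finset.mem_Ioc] at hm
  rw [pairIdx_origV (by omega)]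
  exact hm.1

lemma disjoint_Fsub_of_pairIdx_le {F : Finset (V d)} (hF : ∀ x ∈ F, pairIdx x ≤ i) :
    Disjoint (Fsub d i) F :=
  Finset.disjoint_left.2 fun x hx hxF => (lt_pairIdx_of_mem_Fsub hx).not_ge (hF x hxF)

lemma origV_mem_Fsub {m : ℕ} (him : i < m) (hm : m ≤ d + 1) : origV d m ∈ Fsub d i :=
  Finset.mem_image_of_mem _ (Finset.mem_Ioc.2 ⟨him, hm⟩)

lemma Fsub_succ (hi : i ≤ d) : Fsub d (i+1) = (Fsub d i).erase (origV d (i+1)) := by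
  ext x
  simp only [Fsub, Finset.mem_erase, Finset.mem_image, Finset.mem_Ioc]
  constructor
  · rintro ⟨m, hm, rfl⟩
    refine ⟨fun h => ?_, m, ⟨by omega, hm.2⟩, rfl⟩
    have := congrArg pairIdx h
    rw [pairIdx_origV (by omega), pairIdx_origV (by omega)] at this
    omega
  · rintro ⟨hne, m, hm, rfl⟩
    exact ⟨m, ⟨lt_of_le_of_ne hm.1 fun h => hne (h ▸ rfl), hm.2⟩, rfl⟩

lemma Fsub_self : Fsub d d = {origV d (d+1)} := by
  rw [Fsub, Nat.Ioc_succ_singleton, Finset.image_singleton]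

lemma pairIdx_ne_of_mem_Gface {x : V d} (hx : x ∈ Gface d j) : pairIdx x ≠ j := by
  obtain ⟨m, hm, rfl⟩ := Finset.mem_image.1 hx
  rw [Finset.mem_filter, Finset.mem_range] at hm
  rw [pairIdx_origV hm.1]
  exact hm.2

lemma Fsub_subset_Gface : Fsub d j ⊆ Gface d j :=
  Finset.image_subset_image fun m hm => by
    simp only [Finset.mem_Ioc, Finset.mem_filter, Finset.mem_range] at hm ⊢
    omega

lemma Fsub_notMem_GammaC (hij : i < j) (hj : j ≤ d + 1) : Fsub d i ∉ GammaC d j := fun h =>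
  pairIdx_ne_of_mem_Gface (h (origV_mem_Fsub hij hj)) (pairIdx_origV (by omega))

lemma Gface_sdiff_Fsub (hj : j ≤ d + 1) :
    Gface d j \ Fsub d j = (Finset.range j).image (origV d) := by
  have hinj : Set.InjOn (origV d) (Finset.range (d+2)) := fun m hm n hn h => by
    simpa [pairIdx_origV (Finset.mem_range.1 hm), pairIdx_origV (Finset.mem_range.1 hn)]
      using congrArg pairIdx h
  rw [Gface, Fsub, ← Finset.image_sdiff_of_injOn (hinj.mono (Finset.filter_subset _ _))]
  · congr 1
    ext m
    simp only [Finset.mem_sdiff, Finset.mem_filter, Finset.mem_range, Finset.mem_Ioc]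
    omega
  · intro m
    simp only [Finset.mem_Ioc, Finset.mem_filter, Finset.mem_range]
    omega

lemma bdrySimplex_singleton {W : Type*} (x : W) : bdrySimplex {x} = {∅} := by
  ext F
  simp [bdrySimplex, Finset.ssubset_singleton_iff]

/-- The face `{0, …, j-1, v_j}` of the paper's formula for `Diam(Γ_j)`. -/
def headFace (d j : ℕ) : Finset (V d) := (Finset.range j).image (origV d) ∪ {newV d j}

lemma pairIdx_le_of_mem_headFace (hj : j ≤ d) {x : V d} (hx : x ∈ headFace d j) :
    pairIdx x ≤ j := by
  rcases Finset.mem_union.1 hx with hx | hx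
  · obtain ⟨m, hm, rfl⟩ := Finset.mem_image.1 hx
    rw [Finset.mem_range] at hm
    rw [pairIdx_origV (by omega)]
    exact hm.le
  · rw [Finset.mem_singleton.1 hx, pairIdx_newV (by omega)]

lemma headFace_image_liftV (hj : j ≤ d) : (headFace d j).image (liftV d) = headFace (d+1) j := by
  rw [headFace, headFace, Finset.image_union, Finset.image_singleton, liftV_newV (by omega),
    Finset.image_image]
  congr 1
  refine Finset.image_congr fun m hm => liftV_origV ?_
  rw [Finset.mem_coe, Finset.mem_range] at hm
  omega

end Faces

section Diamond

variable {d i j n : ℕ}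

def partialDiam (d n : ℕ) (Δ : Set (Finset (V d))) : Set (Finset (V d)) :=
  (List.range n).foldl (fun Γ i => sdC (newV d i) (Fsub d i) Γ) Δ

lemma partialDiam_succ (Δ : Set (Finset (V d))) :
    partialDiam d (n+1) Δ = sdC (newV d n) (Fsub d n) (partialDiam d n Δ) := by
  simp [partialDiam, List.range_succ]

lemma partialDiam_iUnion {ι : Sort*} (f : ι → Set (Finset (V d))) :
    partialDiam d n (⋃ k, f k) = ⋃ k, partialDiam d n (f k) := by
  induction n with
  | zero => rfl
  | succ n ih => simp only [partialDiam_succ, ih, sdC_iUnion]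

lemma Diam_iUnion {ι : Sort*} (f : ι → Set (Finset (V d))) :
    Diam d (⋃ k, f k) = ⋃ k, Diam d (f k) :=
  partialDiam_iUnion f

lemma partialDiam_GammaC_of_le (hnj : n ≤ j) (hj : j ≤ d + 1) :
    partialDiam d n (GammaC d j) = GammaC d j := by
  induction n with
  | zero => rfl
  | succ n ih =>
    rw [partialDiam_succ, ih (by omega)]
    exact sdC_of_notMem IsComplex.simplexOn (Fsub_notMem_GammaC (by omega) hj)

/-- The complex reached after subdividing `GammaC d j` at `F_0, …, F_i`, for `j ≤ i`. -/
def diamStage (d j i : ℕ) : Set (Finset (V d)) :=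
  joinC (simplexOn (headFace d j)) (joinC (crossN d (Finset.Ioc j i)) (bdrySimplex (Fsub d i)))

lemma partialDiam_GammaC_self (hj : j ≤ d) :
    partialDiam d (j+1) (GammaC d j) = diamStage d j j := by
  rw [partialDiam_succ, partialDiam_GammaC_of_le le_rfl (by omega), GammaC,
    sdC_simplexOn _ Fsub_subset_Gface, Gface_sdiff_Fsub (by omega), diamStage, headFace,
    Finset.Ioc_self, crossN_empty, singleton_empty_joinC, simplexOn_union]
  ac_rfl

lemma sdC_diamStage (hji : j ≤ i) (hid : i < d) :
    sdC (newV d (i+1)) (Fsub d (i+1)) (diamStage d j i) = diamStage d j (i+1) := by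
  have hdisj : ∀ a ∈ joinC (simplexOn (headFace d j)) (crossN d (Finset.Ioc j i)),
      Disjoint (Fsub d (i+1)) a := by
    rintro _ ⟨s, hs, c, hc, rfl⟩
    refine disjoint_Fsub_of_pairIdx_le fun x hx => ?_
    rcases Finset.mem_union.1 hx with hx | hx
    · exact (pairIdx_le_of_mem_headFace (by omega) (hs hx)).trans (by omega)
    · have := Finset.mem_Ioc.1 (((mem_crossN fun m hm => by grind).1 hc).1 x hx)
      omega
  rw [diamStage, diamStage, ← joinC_assoc, sdC_joinC _ hdisj, Fsub_succ hid.le,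
    sdC_bdrySimplex _ (origV_mem_Fsub (by omega) (by omega)), ← Fsub_succ hid.le,
    ← crossN_singleton, ← Finset.insert_Ioc_right_eq_Ioc_add_one hji,
    crossN_insert (by simp) (by omega) fun m hm => by grind]
  ac_rfl

lemma partialDiam_GammaC (hji : j ≤ i) (hid : i ≤ d) :
    partialDiam d (i+1) (GammaC d j) = diamStage d j i := by
  induction i, hji using Nat.le_induction with
  | base => exact partialDiam_GammaC_self hid
  | succ i hji ih => rw [partialDiam_succ, ih (by omega), sdC_diamStage hji (by omega)]

lemma Diam_GammaC (hj : j ≤ d) :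
    Diam d (GammaC d j) = joinC (simplexOn (headFace d j)) (crossN d (Finset.Ioc j d)) := by
  rw [Diam, ← partialDiam, partialDiam_GammaC hj le_rfl, diamStage, Fsub_self,
    bdrySimplex_singleton, joinC_singleton_empty]

lemma GammaU_eq_biUnion (I : Finset ℕ) : GammaU d I = ⋃ i ∈ I, GammaC d i := by
  ext F
  simp [GammaU, GammaC, simplexOn]

end Diamond

/-- The paper's dimension `d` is `d+1` here, so `d ∉ I` becomes `∀ i ∈ I, i ≤ d`. -/
theorem stmt10 (d : ℕ) (I : Finset ℕ) (hI : ∀ i ∈ I, i ≤ d) :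
    DiamU (d+1) I = joinC (crossN (d+1) {d+1}) (mapC (liftV d) (DiamU d I)) := by
  simp only [DiamU, GammaU_eq_biUnion, Diam_iUnion, mapC_iUnion, joinC_iUnion]
  refine Set.iUnion₂_congr fun i hi => ?_
  have hid := hI i hi
  rw [Diam_GammaC (by omega), Diam_GammaC hid, mapC_joinC, mapC_simplexOn,
    headFace_image_liftV hid, mapC_liftV_crossN fun m hm => by grind,
    ← Finset.insert_Ioc_right_eq_Ioc_add_one hid,
    crossN_insert (by simp) (by omega) fun m hm => by grind]
  ac_rfl

end Paper
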